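/- On R^4, define P with nonzero entries P^{13} = -p14 e^{x3} sin(x4), P^{14} = p14 e^{x3} cos(x4), P^{23} = -p14 e^{x3} cos(x4), P^{24} = -p14 e^{x3} sin(x4), and P' with nonzero entries P'^{13} = e^{x3}(-α cos x4 + β sin x4), P'^{14} = -e^{x3}(β cos x4 + α sin x4), P'^{23} = e^{x3}(β cos x4 + α sin x4), P'^{24} = e^{x3}(-α cos x4 + β sin x4), where α = a54 x3 - a64 x4, β = a64 x3 + a54 x4, and p14, a54, a64 are real constants. Then P and P' are compatible Poisson structures: [P,P] = [P',P'] = [P,P'] = 0. -/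

import Mathlib

open scoped BigOperators

noncomputable def pd {m : ℕ} (μ : Fin m) (f : (Fin m → ℝ) → ℝ) (x : Fin m → ℝ) : ℝ :=
  fderiv ℝ f x (Pi.single μ 1)

/-- Poisson bracket associated to a bivector field `P`. -/
noncomputable def pbrk {m : ℕ} (P : (Fin m → ℝ) → Fin m → Fin m → ℝ)
    (f g : (Fin m → ℝ) → ℝ) (x : Fin m → ℝ) : ℝ :=
  ∑ μ, ∑ ν, P x μ ν * pd μ f x * pd ν g x

/-- Schouten bracket `[P,P]^{λμν}`. -/
noncomputable def schouten {m : ℕ} (P : (Fin m → ℝ) → Fin m → Fin m → ℝ)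
    (l μ ν : Fin m) (x : Fin m → ℝ) : ℝ :=
  ∑ ρ, (P x ρ l * pd ρ (fun y => P y μ ν) x
      + P x ρ ν * pd ρ (fun y => P y l μ) x
      + P x ρ μ * pd ρ (fun y => P y ν l) x)

/-- Mixed Schouten bracket `[P,Q]^{λμν}`. -/
noncomputable def schoutenMixed {m : ℕ} (P Q : (Fin m → ℝ) → Fin m → Fin m → ℝ)
    (l μ ν : Fin m) (x : Fin m → ℝ) : ℝ :=
  ∑ ρ, (P x ρ l * pd ρ (fun y => Q y μ ν) x + Q x ρ l * pd ρ (fun y => P y μ ν) x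
      + P x ρ ν * pd ρ (fun y => Q y l μ) x + Q x ρ ν * pd ρ (fun y => P y l μ) x
      + P x ρ μ * pd ρ (fun y => Q y ν l) x + Q x ρ μ * pd ρ (fun y => P y ν l) x)

/-- The Poisson bivector `P` on the group `A_{4,12}`. -/
noncomputable def P412 (p14 : ℝ) : (Fin 4 → ℝ) → Fin 4 → Fin 4 → ℝ :=
  fun x μ ν =>
    let A := -(p14 * Real.exp (x 2) * Real.sin (x 3))
    let B := p14 * Real.exp (x 2) * Real.cos (x 3)
    let C := -(p14 * Real.exp (x 2) * Real.cos (x 3))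
    let D := -(p14 * Real.exp (x 2) * Real.sin (x 3))
    !![0, 0, A, B;
       0, 0, C, D;
       -A, -C, 0, 0;
       -B, -D, 0, 0] μ ν

/-- The Poisson bivector `P'` on the group `A_{4,12}`, with
`α = a54 x3 - a64 x4` and `β = a64 x3 + a54 x4`. -/
noncomputable def P412' (a54 a64 : ℝ) : (Fin 4 → ℝ) → Fin 4 → Fin 4 → ℝ :=
  fun x μ ν =>
    let α := a54 * x 2 - a64 * x 3
    let β := a64 * x 2 + a54 * x 3
    let A := Real.exp (x 2) * (-α * Real.cos (x 3) + β * Real.sin (x 3))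
    let B := -(Real.exp (x 2) * (β * Real.cos (x 3) + α * Real.sin (x 3)))
    let C := Real.exp (x 2) * (β * Real.cos (x 3) + α * Real.sin (x 3))
    let D := Real.exp (x 2) * (-α * Real.cos (x 3) + β * Real.sin (x 3))
    !![0, 0, A, B;
       0, 0, C, D;
       -A, -C, 0, 0;
       -B, -D, 0, 0] μ ν
/-! Identify the coordinates (x₃, x₄) with `z = x₃ + i x₄`. Both bivectors are of the form `P_F`
whose only nonzero entries are the block `[[Re F(z), Im F(z)], [-Im F(z), Re F(z)]]` coupling
(x₁, x₂) with (x₃, x₄): `P = P_F` for `F z = i p₁₄ eᶻ` and `P' = P_G` for `G z = -(a₅₄ + i a₆₄) z eᶻ`.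
The derivative of `P_F` along `∂₃`, `∂₄` is the block of `F'(z)`, `i F'(z)`, so the Cauchy–Riemann
equations are built in, and every component of `[P_F, P_G]` is a polynomial identity in the real
and imaginary parts of `F, F', G, G'`. Finally `[P, P]` is half of the mixed bracket of `P` with itself.
-/

open Complex

noncomputable def planeCoord : (Fin 4 → ℝ) →L[ℝ] ℂ :=
  (ContinuousLinearMap.proj 2).smulRight 1 + (ContinuousLinearMap.proj 3).smulRight I

@[simp]
lemma planeCoord_apply (x : Fin 4 → ℝ) : planeCoord x = x 2 + x 3 * I := by
  simp [planeCoord]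

noncomputable def complexBlock : Matrix (Fin 4) (Fin 4) (ℂ →L[ℝ] ℝ) :=
  !![0, 0, reCLM, imCLM;
     0, 0, -imCLM, reCLM;
     -reCLM, imCLM, 0, 0;
     -imCLM, -reCLM, 0, 0]

noncomputable def holomorphicBivector (F : ℂ → ℂ) : (Fin 4 → ℝ) → Fin 4 → Fin 4 → ℝ :=
  fun x μ ν => complexBlock μ ν (F (planeCoord x))

lemma holomorphicBivector_apply (F : ℂ → ℂ) (x : Fin 4 → ℝ) (μ ν : Fin 4) :
    holomorphicBivector F x μ ν =
      !![0, 0, (F (planeCoord x)).re, (F (planeCoord x)).im;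
         0, 0, -(F (planeCoord x)).im, (F (planeCoord x)).re;
         -(F (planeCoord x)).re, (F (planeCoord x)).im, 0, 0;
         -(F (planeCoord x)).im, -(F (planeCoord x)).re, 0, 0] μ ν := by
  fin_cases μ <;> fin_cases ν <;> rfl

lemma pd_holomorphicBivector {F : ℂ → ℂ} {x : Fin 4 → ℝ}
    (hF : DifferentiableAt ℂ F (planeCoord x)) (ρ μ ν : Fin 4) :
    pd ρ (fun y => holomorphicBivector F y μ ν) x =
      complexBlock μ ν (deriv F (planeCoord x) * planeCoord (Pi.single ρ 1)) := by
  have hcomp : HasFDerivAt (fun y => complexBlock μ ν (F (planeCoord y)))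
      ((complexBlock μ ν).comp
        (((ContinuousLinearMap.toSpanSingleton ℂ (deriv F (planeCoord x))).restrictScalars ℝ).comp
          planeCoord)) x :=
    (complexBlock μ ν).hasFDerivAt.comp x
      ((hF.hasDerivAt.hasFDerivAt.restrictScalars ℝ).comp x planeCoord.hasFDerivAt)
  simp only [pd, holomorphicBivector, hcomp.fderiv]
  simp [mul_comm]

lemma schoutenMixed_holomorphicBivector {F G : ℂ → ℂ} {x : Fin 4 → ℝ}
    (hF : DifferentiableAt ℂ F (planeCoord x)) (hG : DifferentiableAt ℂ G (planeCoord x))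
    (l μ ν : Fin 4) :
    schoutenMixed (holomorphicBivector F) (holomorphicBivector G) l μ ν x = 0 := by
  have h0 : planeCoord (Pi.single 0 1) = 0 := by simp
  have h1 : planeCoord (Pi.single 1 1) = 0 := by simp
  have h2 : planeCoord (Pi.single 2 1) = 1 := by simp
  have h3 : planeCoord (Pi.single 3 1) = I := by simp
  simp only [schoutenMixed, pd_holomorphicBivector hF, pd_holomorphicBivector hG,
    Fin.sum_univ_four, h0, h1, h2, h3, mul_zero, mul_one]
  fin_cases l <;> fin_cases μ <;> fin_cases ν <;>
    simp only [holomorphicBivector, complexBlock, Matrix.of_apply, Matrix.cons_val',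
      Matrix.cons_val_zero, Matrix.cons_val_one, Matrix.cons_val, Matrix.cons_val_fin_one,
      Fin.zero_eta, Fin.mk_one, Fin.reduceFinMk, Fin.isValue, zero_apply, neg_apply, reCLM_apply,
      imCLM_apply, mul_re, mul_im, I_re, I_im, zero_re, zero_im] <;>
    ring

lemma schoutenMixed_self {m : ℕ} (P : (Fin m → ℝ) → Fin m → Fin m → ℝ) (l μ ν : Fin m)
    (x : Fin m → ℝ) : schoutenMixed P P l μ ν x = 2 * schouten P l μ ν x := by
  rw [schouten, Finset.mul_sum]
  exact Finset.sum_congr rfl fun ρ _ => by ring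

lemma schouten_holomorphicBivector {F : ℂ → ℂ} {x : Fin 4 → ℝ}
    (hF : DifferentiableAt ℂ F (planeCoord x)) (l μ ν : Fin 4) :
    schouten (holomorphicBivector F) l μ ν x = 0 := by
  have h := schoutenMixed_holomorphicBivector hF hF l μ ν
  rw [schoutenMixed_self] at h
  linarith

lemma P412_eq (p14 : ℝ) : P412 p14 = holomorphicBivector (fun w => I * p14 * exp w) := by
  funext x μ ν
  have hre : (I * p14 * exp (planeCoord x)).re = -(p14 * Real.exp (x 2) * Real.sin (x 3)) := by
    simp [exp_re, exp_im, mul_assoc]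
  have him : (I * p14 * exp (planeCoord x)).im = p14 * Real.exp (x 2) * Real.cos (x 3) := by
    simp [exp_re, exp_im, mul_assoc]
  rw [holomorphicBivector_apply, hre, him]
  simp only [P412, neg_neg]

lemma P412'_eq (a54 a64 : ℝ) :
    P412' a54 a64 = holomorphicBivector (fun w => -(⟨a54, a64⟩ * w * exp w)) := by
  funext x μ ν
  set α := a54 * x 2 - a64 * x 3
  set β := a64 * x 2 + a54 * x 3
  have hre : (-(⟨a54, a64⟩ * planeCoord x * exp (planeCoord x))).re =
      Real.exp (x 2) * (-α * Real.cos (x 3) + β * Real.sin (x 3)) := by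
    simp only [α, β, planeCoord_apply, neg_re, mul_re, mul_im, add_re, add_im, ofReal_re,
      ofReal_im, I_re, I_im, exp_re, exp_im, mul_zero, mul_one, sub_self, add_zero, zero_add]
    ring
  have him : (-(⟨a54, a64⟩ * planeCoord x * exp (planeCoord x))).im =
      -(Real.exp (x 2) * (β * Real.cos (x 3) + α * Real.sin (x 3))) := by
    simp only [α, β, planeCoord_apply, neg_im, mul_re, mul_im, add_re, add_im, ofReal_re,
      ofReal_im, I_re, I_im, exp_re, exp_im, mul_zero, mul_one, sub_self, add_zero, zero_add]
    ring
  rw [holomorphicBivector_apply, hre, him]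
  simp only [P412', neg_neg]
  rfl

theorem A412_compatible (p14 a54 a64 : ℝ) :
    (∀ x l μ ν, schouten (P412 p14) l μ ν x = 0) ∧
    (∀ x l μ ν, schouten (P412' a54 a64) l μ ν x = 0) ∧
    (∀ x l μ ν, schoutenMixed (P412 p14) (P412' a54 a64) l μ ν x = 0) := by
  have hF : Differentiable ℂ (fun w => I * p14 * exp w) := by fun_prop
  have hG : Differentiable ℂ (fun w => -(⟨a54, a64⟩ * w * exp w) : ℂ → ℂ) := by fun_prop
  rw [P412_eq, P412'_eq]
  exact ⟨fun x => schouten_holomorphicBivector (hF _), fun x => schouten_holomorphicBivector (hG _),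
    fun x => schoutenMixed_holomorphicBivector (hF _) (hG _)⟩
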